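/- Let W be a Coxeter group and X, Y ⊆ S subsets of the generating set. Let w₀ ∈ W be (X,Y)-minimal (of minimal length in its double coset W_X w₀ W_Y) and suppose w₀ W_Y w₀⁻¹ ⊆ W_X. Then for every y ∈ Y there exists x ∈ X such that w₀ s_y w₀⁻¹ = s_x; that is, conjugation by w₀ maps the generating set S_Y into the generating set S_X. -/

import Mathlib

/-!
Put `t = w₀ s_y w₀⁻¹ ∈ W_X`. Minimality of `w₀` gives `ℓ(w₀ s_y) = ℓ(w₀) + 1` and, through the
strong exchange condition, `ℓ(u w₀) = ℓ(u) + ℓ(w₀)` for every `u ∈ W_X`: if the first letter of a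
reduced `X`-word for `u` could be cancelled in `u w₀`, exchange would delete a letter either from
the rest of that word, contradicting reducedness, or from a reduced word of `w₀`, contradicting
minimality. As `t w₀ = w₀ s_y`, this forces `ℓ(t) = 1`; and by the deletion condition `t` has a
reduced word with all letters in `X`, so `t = s_x` for some `x ∈ X`.

The strong exchange condition comes from the permutation representation of `W` on `W × ZMod 2`
(Björner–Brenti, §1.4): the parity of the number of occurrences of `t` in the left inversion
sequence of a word depends only on the product of the word.
-/

open CoxeterSystem

/-- The standard parabolic subgroup `W_X` of a Coxeter group. -/
def coxParabolic {B W : Type*} [Group W] {M : CoxeterMatrix B} (cs : CoxeterSystem M W)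
    (X : Set B) : Subgroup W :=
  Subgroup.closure (cs.simple '' X)

namespace CoxeterSystem

variable {B W : Type*} [Group W] {M : CoxeterMatrix B} (cs : CoxeterSystem M W)

local prefix:100 "s" => cs.simple
local prefix:100 "π" => cs.wordProd
local prefix:100 "ℓ" => cs.length
local prefix:100 "lis" => cs.leftInvSeq

theorem prod_map_alternatingWord_two_mul {G : Type*} [Monoid G] (f : B → G) (i j : B) (p : ℕ) :
    ((alternatingWord i j (2 * p)).map f).prod = (f i * f j) ^ p := by
  induction p with
  | zero => simp [alternatingWord]
  | succ p ih =>
    rw [Nat.mul_succ, alternatingWord_succ', alternatingWord_succ']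
    simp [ih, pow_succ', mul_assoc, parity_simps]

theorem even_count_leftInvSeq_alternatingWord [DecidableEq W] (i j : B) (t : W) :
    Even ((lis (alternatingWord i j (2 * M i j))).count t) := by
  set L := lis (alternatingWord i j (2 * M i j))
  have hL : L.length = 2 * M i j := by simp [L]
  have hperiod : L.drop (M i j) = L.take (M i j) := by
    refine List.ext_getElem (by simp only [List.length_drop, List.length_take, hL]; omega)
      fun k h₁ h₂ => ?_
    simp only [List.length_drop, List.length_take, hL] at h₁ h₂
    rw [List.getElem_drop, List.getElem_take,
      getElem_leftInvSeq_alternatingWord cs i j _ (M i j + k) (by omega),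
      getElem_leftInvSeq_alternatingWord cs i j _ k (by omega),
      prod_alternatingWord_eq_mul_pow, prod_alternatingWord_eq_mul_pow]
    simp [parity_simps, Nat.mul_add_div, pow_add, M.symmetric i j, cs.simple_mul_simple_pow]
  rw [← List.take_append_drop (M i j) L, List.count_append, hperiod]
  exact ⟨_, rfl⟩

section PermRep

variable [DecidableEq W]

/-- Björner–Brenti's `η_i`, acting on all of `W` rather than only on the reflections. -/
noncomputable def permRepSimple (i : B) : Function.End (W × ZMod 2) :=
  fun p => (s i * p.1 * s i, p.2 + if p.1 = s i then 1 else 0)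

theorem prod_map_permRepSimple_apply (ω : List B) (t : W) (ε : ZMod 2) :
    (ω.map cs.permRepSimple).prod ((π ω)⁻¹ * t * π ω, ε) = (t, ε + (lis ω).count t) := by
  induction ω generalizing t with
  | nil => simp [Function.End.one_def]
  | cons i ω ih =>
    have hw : (π (i :: ω))⁻¹ * t * π (i :: ω) = (π ω)⁻¹ * (s i * t * s i) * π ω := by
      simp [wordProd_cons, mul_assoc]
    have hcount : (lis ω |>.map (MulAut.conj (s i))).count t = (lis ω).count (s i * t * s i) := by
      conv_lhs => rw [show t = MulAut.conj (s i) (s i * t * s i) by simp [mul_assoc]]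
      exact List.count_map_of_injective _ _ (MulAut.conj (s i)).injective _
    rw [List.map_cons, List.prod_cons, Function.End.mul_def, hw]
    change cs.permRepSimple i ((ω.map cs.permRepSimple).prod _) = _
    rw [ih, leftInvSeq, List.count_cons, hcount]
    simp only [permRepSimple, Prod.mk.injEq]
    constructor
    · simp [mul_assoc]
    · have : s i * t * s i = s i ↔ s i = t := by
        simp [mul_assoc, mul_eq_one_iff_eq_inv, eq_comm]
      simp [this, add_assoc]

theorem isLiftable_permRepSimple : M.IsLiftable cs.permRepSimple := by
  intro i j
  funext ⟨t, ε⟩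
  have hprod : π (alternatingWord i j (2 * M i j)) = 1 := by
    simp [prod_alternatingWord_eq_mul_pow, cs.simple_mul_simple_pow]
  have := cs.prod_map_permRepSimple_apply (alternatingWord i j (2 * M i j)) t ε
  rw [hprod, inv_one, one_mul, mul_one, prod_map_alternatingWord_two_mul,
    (even_count_leftInvSeq_alternatingWord cs i j t).natCast_zmod_two, add_zero] at this
  exact this

noncomputable def permRep : W →* Function.End (W × ZMod 2) :=
  cs.lift ⟨cs.permRepSimple, cs.isLiftable_permRepSimple⟩

theorem permRep_wordProd_apply (ω : List B) (t : W) (ε : ZMod 2) :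
    cs.permRep (π ω) ((π ω)⁻¹ * t * π ω, ε) = (t, ε + (lis ω).count t) := by
  simp only [permRep, wordProd, map_list_prod, List.map_map, Function.comp_def, lift_apply_simple]
  exact cs.prod_map_permRepSimple_apply ω t ε

theorem permRep_simple_apply_simple (i : B) (ε : ZMod 2) :
    cs.permRep (s i) (s i, ε) = (s i, ε + 1) := by
  simp [permRep, permRepSimple]

theorem permRep_apply_self_of_isReflection {t : W} (ht : cs.IsReflection t) (ε : ZMod 2) :
    cs.permRep t (t, ε) = (t, ε + 1) := by
  obtain ⟨u, i, rfl⟩ := ht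
  obtain ⟨ν, rfl⟩ := cs.wordProd_surjective u
  set t := π ν * s i * (π ν)⁻¹ with ht
  set a : ZMod 2 := (((lis ν.reverse).count (s i) : ℕ) : ZMod 2)
  set b : ZMod 2 := (((lis ν).count t : ℕ) : ZMod 2)
  have h₁ (δ : ZMod 2) : cs.permRep (π ν)⁻¹ (t, δ) = (s i, δ + a) := by
    have := cs.permRep_wordProd_apply ν.reverse (s i) δ
    rwa [wordProd_reverse, inv_inv, ← ht] at this
  have h₂ (δ : ZMod 2) : cs.permRep (π ν) (s i, δ) = (t, δ + b) := by
    have := cs.permRep_wordProd_apply ν t δ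
    rwa [show (π ν)⁻¹ * t * π ν = s i by simp [t, mul_assoc]] at this
  have hab : a + b = 0 := by
    have : cs.permRep (π ν) (cs.permRep (π ν)⁻¹ (t, 0)) = (t, 0) := by
      change (cs.permRep (π ν) * cs.permRep (π ν)⁻¹) (t, 0) = (t, 0)
      rw [← map_mul, mul_inv_cancel, map_one]
      rfl
    rw [h₁, h₂, Prod.mk.injEq, zero_add] at this
    exact this.2
  calc cs.permRep t (t, ε)
      = cs.permRep (π ν) (cs.permRep (s i) (cs.permRep (π ν)⁻¹ (t, ε))) := by
        rw [ht, map_mul, map_mul]; rfl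
    _ = (t, ε + 1) := by
        rw [h₁, permRep_simple_apply_simple, h₂]
        congr 1
        linear_combination hab

end PermRep

theorem mem_leftInvSeq_of_isLeftInversion {ω : List B} {t : W}
    (h : cs.IsLeftInversion (π ω) t) : t ∈ lis ω := by
  classical
  obtain ⟨ht, hlt⟩ := h
  obtain ⟨ω', hω', hprod⟩ := cs.exists_isReduced (t * π ω)
  have hnot : t ∉ lis ω' := fun hmem => by
    have := (cs.isLeftInversion_of_mem_leftInvSeq hω' hmem).2
    rw [← hprod, ← mul_assoc, ht.mul_self, one_mul] at this
    exact hlt.not_gt this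
  have hconj : (π ω')⁻¹ * t * π ω' = (π ω)⁻¹ * t * π ω := by
    rw [← hprod]
    group
  have key := cs.permRep_wordProd_apply ω' t 0
  rw [hconj, ← hprod, map_mul, Function.End.mul_def] at key
  change cs.permRep t (cs.permRep (π ω) _) = _ at key
  rw [permRep_wordProd_apply, cs.permRep_apply_self_of_isReflection ht,
    List.count_eq_zero_of_not_mem hnot, Prod.mk.injEq] at key
  rw [← List.count_pos_iff, Nat.pos_iff_ne_zero]
  rintro hzero
  simp [hzero] at key

theorem exists_eraseIdx_of_isLeftInversion {ω : List B} {t : W}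
    (h : cs.IsLeftInversion (π ω) t) : ∃ j < ω.length, t * π ω = π (ω.eraseIdx j) := by
  obtain ⟨j, hj, rfl⟩ := List.mem_iff_getElem.mp (cs.mem_leftInvSeq_of_isLeftInversion h)
  rw [length_leftInvSeq] at hj
  exact ⟨j, hj, by rw [← List.getD_eq_getElem _ 1, getD_leftInvSeq_mul_wordProd]⟩

theorem exists_isReduced_sublist (ω : List B) :
    ∃ ω' : List B, ω'.Sublist ω ∧ cs.IsReduced ω' ∧ π ω' = π ω := by
  induction ω with
  | nil => exact ⟨[], .refl _, by simp [IsReduced], rfl⟩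
  | cons i ω ih =>
    obtain ⟨ω', hsub, hred, hprod⟩ := ih
    rcases cs.length_simple_mul (π ω') i with hlen | hlen
    · refine ⟨i :: ω', hsub.cons_cons i, ?_, by rw [wordProd_cons, wordProd_cons, hprod]⟩
      rw [IsReduced, wordProd_cons, hlen, hred, List.length_cons]
    · have hinv : cs.IsLeftInversion (π ω') (s i) :=
        (cs.isLeftInversion_simple_iff_isLeftDescent _ _).mpr (by unfold IsLeftDescent; omega)
      obtain ⟨j, hj, herase⟩ := cs.exists_eraseIdx_of_isLeftInversion hinv
      refine ⟨ω'.eraseIdx j, (ω'.eraseIdx_sublist j).trans (hsub.cons i), ?_, ?_⟩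
      · rw [IsReduced, ← herase, List.length_eraseIdx_of_lt hj, ← hred]
        omega
      · rw [← herase, hprod, wordProd_cons]

variable {X : Set B}

theorem wordProd_mem_coxParabolic {ω : List B} (hX : ∀ i ∈ ω, i ∈ X) :
    π ω ∈ coxParabolic cs X :=
  Subgroup.list_prod_mem _ fun _ hw => by
    obtain ⟨i, hi, rfl⟩ := List.mem_map.mp hw
    exact Subgroup.subset_closure ⟨i, hX i hi, rfl⟩

theorem exists_word_of_mem_coxParabolic {u : W} (hu : u ∈ coxParabolic cs X) :
    ∃ ω : List B, (∀ i ∈ ω, i ∈ X) ∧ π ω = u := by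
  induction hu using Subgroup.closure_induction with
  | mem _ hx =>
    obtain ⟨i, hi, rfl⟩ := hx
    exact ⟨[i], by simpa using hi, wordProd_singleton cs i⟩
  | one => exact ⟨[], by simp, wordProd_nil cs⟩
  | mul _ _ _ _ ih₁ ih₂ =>
    obtain ⟨ω₁, h₁, rfl⟩ := ih₁
    obtain ⟨ω₂, h₂, rfl⟩ := ih₂
    exact ⟨ω₁ ++ ω₂, fun i hi => (List.mem_append.mp hi).elim (h₁ i) (h₂ i),
      wordProd_append cs ω₁ ω₂⟩
  | inv _ _ ih =>
    obtain ⟨ω, h, rfl⟩ := ih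
    exact ⟨ω.reverse, by simpa using h, wordProd_reverse cs ω⟩

theorem exists_isReduced_of_mem_coxParabolic {u : W} (hu : u ∈ coxParabolic cs X) :
    ∃ ω : List B, (∀ i ∈ ω, i ∈ X) ∧ cs.IsReduced ω ∧ π ω = u := by
  obtain ⟨ω, hX, rfl⟩ := cs.exists_word_of_mem_coxParabolic hu
  obtain ⟨ω', hsub, hred, hprod⟩ := cs.exists_isReduced_sublist ω
  exact ⟨ω', fun i hi => hX i (hsub.subset hi), hred, hprod⟩

theorem exists_mem_eq_simple_of_length_eq_one {u : W} (hu : u ∈ coxParabolic cs X)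
    (hlen : ℓ u = 1) : ∃ x ∈ X, u = s x := by
  obtain ⟨ω, hX, hred, rfl⟩ := cs.exists_isReduced_of_mem_coxParabolic hu
  obtain ⟨x, rfl⟩ := List.length_eq_one_iff.mp (hred.symm.trans hlen)
  exact ⟨x, hX x (List.mem_singleton_self x), wordProd_singleton cs x⟩

section MinimalCosetRepresentative

variable {w₀ : W} (hmin : ∀ u ∈ coxParabolic cs X, cs.length w₀ ≤ cs.length (u * w₀))
include hmin

theorem not_isLeftDescent_wordProd_mul {i : B} {ω : List B} (hX : ∀ j ∈ i :: ω, j ∈ X)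
    (hred : cs.IsReduced (i :: ω)) : ¬ cs.IsLeftDescent (π ω * w₀) i := by
  intro hdesc
  obtain ⟨ω₀, hred₀, rfl⟩ := cs.exists_isReduced w₀
  rw [← wordProd_append, ← isLeftInversion_simple_iff_isLeftDescent] at hdesc
  obtain ⟨j, hj, herase⟩ := cs.exists_eraseIdx_of_isLeftInversion hdesc
  rw [List.length_append] at hj
  rcases lt_or_ge j ω.length with hjω | hjω
  · rw [List.eraseIdx_append_of_lt_length hjω, wordProd_append, wordProd_append, ← mul_assoc,
      mul_left_inj] at herase
    have := cs.length_wordProd_le (ω.eraseIdx j)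
    rw [← herase, ← wordProd_cons, hred, List.length_cons, List.length_eraseIdx_of_lt hjω] at this
    omega
  · rw [List.eraseIdx_append_of_length_le hjω, wordProd_append, wordProd_append] at herase
    have hu : (π ω)⁻¹ * s i * π ω ∈ coxParabolic cs X :=
      mul_mem (mul_mem (inv_mem (cs.wordProd_mem_coxParabolic fun j hj => hX j (.tail i hj)))
        (Subgroup.subset_closure ⟨i, hX i (.head ω), rfl⟩))
        (cs.wordProd_mem_coxParabolic fun j hj => hX j (.tail i hj))
    have hshorter := hmin _ hu
    rw [show (π ω)⁻¹ * s i * π ω * π ω₀ = π (ω₀.eraseIdx (j - ω.length)) by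
      rw [mul_assoc, mul_assoc, herase, inv_mul_cancel_left]] at hshorter
    have := cs.length_wordProd_le (ω₀.eraseIdx (j - ω.length))
    rw [List.length_eraseIdx_of_lt (by omega)] at this
    rw [hred₀] at hshorter
    omega

theorem length_wordProd_mul_of_isReduced {ω : List B} (hX : ∀ i ∈ ω, i ∈ X)
    (hred : cs.IsReduced ω) : ℓ (π ω * w₀) = ω.length + ℓ w₀ := by
  induction ω with
  | nil => simp
  | cons i ω ih =>
    have hlen := ih (fun j hj => hX j (.tail i hj)) (by simpa using hred.drop 1)
    rcases cs.length_simple_mul (π ω * w₀) i with h | h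
    · rw [wordProd_cons, mul_assoc, h, hlen, List.length_cons]
      ring
    · exact absurd (by unfold IsLeftDescent; omega) (cs.not_isLeftDescent_wordProd_mul hmin hX hred)

theorem length_mul_of_mem_coxParabolic {u : W} (hu : u ∈ coxParabolic cs X) :
    ℓ (u * w₀) = ℓ u + ℓ w₀ := by
  obtain ⟨ω, hX, hred, rfl⟩ := cs.exists_isReduced_of_mem_coxParabolic hu
  rw [cs.length_wordProd_mul_of_isReduced hmin hX hred, hred]

end MinimalCosetRepresentative

end CoxeterSystem

/-- If `w₀` is `(X,Y)`-minimal and `w₀ W_Y w₀⁻¹ ⊆ W_X`, then conjugation by `w₀` sends each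
generator `s_y` (`y ∈ Y`) to a generator `s_x` with `x ∈ X`. -/
theorem min_conj_simple_mem {B W : Type*} [Group W] {M : CoxeterMatrix B}
    (cs : CoxeterSystem M W) (X Y : Set B) (w₀ : W)
    (hmin : ∀ u₁ ∈ coxParabolic cs X, ∀ u₂ ∈ coxParabolic cs Y,
      cs.length w₀ ≤ cs.length (u₁ * w₀ * u₂))
    (hconj : ∀ u ∈ coxParabolic cs Y, w₀ * u * w₀⁻¹ ∈ coxParabolic cs X) :
    ∀ y ∈ Y, ∃ x ∈ X, w₀ * cs.simple y * w₀⁻¹ = cs.simple x := by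
  intro y hy
  have hsy : cs.simple y ∈ coxParabolic cs Y := Subgroup.subset_closure ⟨y, hy, rfl⟩
  have hmin_left : ∀ u ∈ coxParabolic cs X, cs.length w₀ ≤ cs.length (u * w₀) := fun u hu => by
    simpa using hmin u hu 1 (one_mem _)
  have hlen_right : cs.length (w₀ * cs.simple y) = cs.length w₀ + 1 := by
    have := hmin 1 (one_mem _) _ hsy
    rw [one_mul] at this
    rcases cs.length_mul_simple w₀ y with h | h <;> omega
  have hadd := cs.length_mul_of_mem_coxParabolic hmin_left (hconj _ hsy)
  rw [show w₀ * cs.simple y * w₀⁻¹ * w₀ = w₀ * cs.simple y by group, hlen_right] at hadd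
  exact cs.exists_mem_eq_simple_of_length_eq_one (hconj _ hsy) (by omega)
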